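/- Let {e^{tL}}_{t≥0} be a quantum dynamical semigroup of unital channels on M_d and let P := span{X ∈ M_d : L(X) = iaX for some a ∈ ℝ}. Then for every t ≥ 0, e^{tL} maps P bijectively onto P, and the restriction e^{tL}|_P is a trace-preserving *-automorphism of P: for all X, Y ∈ P, e^{tL}(XY) = e^{tL}(X)e^{tL}(Y), e^{tL}(X*) = e^{tL}(X)*, and tr(e^{tL}(X)) = tr(X). -/

import Mathlib

noncomputable section
open scoped Kronecker
open Filter Topology Matrix

/-- `M_d`, the algebra of `d × d` complex matrices. -/
abbrev Md (d : ℕ) := Matrix (Fin d) (Fin d) ℂ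

/-- `Ad_U : X ↦ U* X U` for a unitary `U`. -/
def adU {d : ℕ} (U : Matrix.unitaryGroup (Fin d) ℂ) : Md d →ₗ[ℂ] Md d where
  toFun X := (U : Md d)ᴴ * X * (U : Md d)
  map_add' X Y := by simp [Matrix.mul_add, Matrix.add_mul]
  map_smul' c X := by simp [Matrix.mul_smul, Matrix.smul_mul]

/-- A linear map is completely positive if it has a Kraus decomposition. -/
def IsCP {d : ℕ} (Φ : Md d →ₗ[ℂ] Md d) : Prop :=
  ∃ (n : ℕ) (V : Fin n → Md d), ∀ X, Φ X = ∑ j, (V j)ᴴ * X * (V j)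

def IsUnital {d : ℕ} (Φ : Md d →ₗ[ℂ] Md d) : Prop := Φ 1 = 1

def IsTracePreserving {d : ℕ} (Φ : Md d →ₗ[ℂ] Md d) : Prop :=
  ∀ X, (Φ X).trace = X.trace

def IsHermitianPreserving {d : ℕ} (Φ : Md d →ₗ[ℂ] Md d) : Prop :=
  ∀ X, Φ Xᴴ = (Φ X)ᴴ

/-- A unital quantum channel: CP, unital and trace-preserving. -/
def IsUnitalChannel {d : ℕ} (Φ : Md d →ₗ[ℂ] Md d) : Prop :=
  IsCP Φ ∧ IsUnital Φ ∧ IsTracePreserving Φ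

/-- A mixed unitary channel: a convex combination of unitary conjugations. -/
def IsMixedUnitary {d : ℕ} (Φ : Md d →ₗ[ℂ] Md d) : Prop :=
  ∃ (ℓ : ℕ) (U : Fin ℓ → Matrix.unitaryGroup (Fin d) ℂ) (lam : Fin ℓ → ℝ),
    (∀ j, 0 ≤ lam j) ∧ (∀ j, lam j ≤ 1) ∧ (∑ j, lam j = 1) ∧
    Φ = ∑ j, (lam j : ℂ) • adU (U j)

/-- The Choi matrix `J(Φ) = (1/d) ∑_{i,j} E_{ij} ⊗ Φ(E_{ij})`. -/
def choi {d : ℕ} (Φ : Md d →ₗ[ℂ] Md d) : Matrix (Fin d × Fin d) (Fin d × Fin d) ℂ :=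
  (d : ℂ)⁻¹ • ∑ i : Fin d, ∑ j : Fin d,
    (Matrix.single i j (1 : ℂ)) ⊗ₖ Φ (Matrix.single i j (1 : ℂ))

/-- `⟨Φ, Ψ⟩ = tr(J(Φ)* J(Ψ))`; this is a real number whenever `Φ, Ψ` are
Hermitian-preserving, so we record its real part. -/
def pairRe {d : ℕ} (Φ Ψ : Md d →ₗ[ℂ] Md d) : ℝ := (((choi Φ)ᴴ * choi Ψ).trace).re

/-- The Hilbert–Schmidt (Choi) norm `‖Φ‖₂ = tr(J(Φ)* J(Φ))^{1/2}`. -/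
def hsNorm {d : ℕ} (Φ : Md d →ₗ[ℂ] Md d) : ℝ := Real.sqrt (pairRe Φ Φ)

attribute [local instance] Matrix.normedAddCommGroup Matrix.normedSpace

/-- The exponential `e^{tL}` of a linear map `L` on `M_d`. -/
def expL {d : ℕ} (L : Md d →ₗ[ℂ] Md d) (t : ℝ) : Md d →ₗ[ℂ] Md d :=
  letI : NormedRing (Md d →L[ℂ] Md d) := ContinuousLinearMap.toNormedRing
  ((@NormedSpace.exp (Md d →L[ℂ] Md d) NormedRing.toRing _ NonUnitalSeminormedRing.toIsTopologicalRing
      ((t : ℂ) • (LinearMap.toContinuousLinearMap L)) :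
      Md d →L[ℂ] Md d)).toLinearMap

/-- `P = span{X : L X = i a X for some real a}`. -/
def periphGen {d : ℕ} (L : Md d →ₗ[ℂ] Md d) : Submodule ℂ (Md d) :=
  Submodule.span ℂ {X : Md d | ∃ a : ℝ, L X = ((a : ℂ) * Complex.I) • X}

/-!
Write `e^{tL}(X) = ∑ⱼ Vⱼ* X Vⱼ` in Kraus form. A generator `X` of `P` with `L X = i a X` is
an eigenvector of `e^{tL}` with the unimodular eigenvalue `μ = e^{ita}`, so `e^{tL}` maps `P`
onto itself, and it is injective, being an exponential. For such `X`,
`e^{tL}(X*X) - e^{tL}(X)* e^{tL}(X) = ∑ⱼ (X Vⱼ - Vⱼ e^{tL}(X))* (X Vⱼ - Vⱼ e^{tL}(X))`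
has trace `tr(X*X) - |μ|² tr(X*X) = 0`, so `X Vⱼ = Vⱼ e^{tL}(X)` for all `j`. These
intertwining relations are linear in `X`, hence hold on all of `P`, and they make `e^{tL}`
multiplicative there. Hermiticity and trace preservation hold on all of `M_d`.
-/

section Exp

variable {E : Type*} [NormedAddCommGroup E] [NormedSpace ℂ E] [CompleteSpace E]

theorem NormedSpace.exp_apply_of_apply_eq_smul (A : E →L[ℂ] E) {c : ℂ} {x : E}
    (hx : A x = c • x) : NormedSpace.exp A x = Complex.exp c • x := by
  have hpow : ∀ n : ℕ, (A ^ n) x = c ^ n • x := by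
    intro n
    induction n with
    | zero => simp
    | succ n ih => rw [pow_succ', mul_apply_eq_comp, ih, map_smul, hx, smul_smul, pow_succ]
  have hA := (NormedSpace.exp_series_hasSum_exp' (𝕂 := ℂ) A).mapL (ContinuousLinearMap.apply ℂ E x)
  have hc := (NormedSpace.exp_series_hasSum_exp' (𝕂 := ℂ) c).smul_const x
  rw [← Complex.exp_eq_exp_ℂ] at hc
  refine hA.unique ?_
  simpa [hpow, smul_smul] using hc

theorem NormedSpace.exp_continuousLinearMap_injective (A : E →L[ℂ] E) :
    Function.Injective (NormedSpace.exp A : E →L[ℂ] E) := by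
  let _ := NormedAlgebra.restrictScalars ℚ ℂ (E →L[ℂ] E)
  exact (ContinuousLinearMap.isUnit_iff_bijective.mp (NormedSpace.isUnit_exp A)).1

end Exp

theorem Submodule.map_span_eq_self_of_forall_eq_smul {K M : Type*} [Field K] [AddCommGroup M]
    [Module K M] (f : M →ₗ[K] M) {S : Set M} (hS : ∀ x ∈ S, ∃ μ : K, μ ≠ 0 ∧ f x = μ • x) :
    (Submodule.span K S).map f = Submodule.span K S := by
  rw [Submodule.map_span]
  apply le_antisymm
  · refine Submodule.span_le.mpr ?_
    rintro _ ⟨x, hx, rfl⟩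
    obtain ⟨μ, -, hμ⟩ := hS x hx
    exact hμ ▸ Submodule.smul_mem _ μ (Submodule.subset_span hx)
  · refine Submodule.span_le.mpr fun x hx => ?_
    obtain ⟨μ, hμ0, hμ⟩ := hS x hx
    have hx' : x = μ⁻¹ • f x := by rw [hμ, inv_smul_smul₀ hμ0]
    exact hx' ▸ Submodule.smul_mem _ _ (Submodule.subset_span ⟨x, hx, rfl⟩)

theorem Matrix.eq_zero_of_trace_sum_conjTranspose_mul_self_eq_zero {ι m k : Type*} [Fintype m]
    [Fintype k] {s : Finset ι} {A : ι → Matrix m k ℂ}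
    (h : (∑ j ∈ s, (A j)ᴴ * A j).trace = 0) : ∀ j ∈ s, A j = 0 := by
  open ComplexOrder in
  rw [Matrix.trace_sum, Finset.sum_eq_zero_iff_of_nonneg
    fun j _ => (Matrix.posSemidef_conjTranspose_mul_self (A j)).trace_nonneg] at h
  exact fun j hj => Matrix.trace_conjTranspose_mul_self_eq_zero_iff.mp (h j hj)

section Kraus

variable {d n : ℕ} {Φ : Md d →ₗ[ℂ] Md d} {V : Fin n → Md d}

theorem sum_kraus_eq_one (hV : ∀ X, Φ X = ∑ j, (V j)ᴴ * X * V j) (hΦ : IsUnital Φ) :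
    ∑ j, (V j)ᴴ * V j = 1 := by
  simpa using (hV 1).symm.trans hΦ

theorem map_conjTranspose_of_kraus (hV : ∀ X, Φ X = ∑ j, (V j)ᴴ * X * V j) (X : Md d) :
    Φ Xᴴ = (Φ X)ᴴ := by
  simp [hV, Matrix.conjTranspose_sum, Matrix.mul_assoc]

theorem map_conjTranspose_mul_self_sub_eq_sum_kraus (hV : ∀ X, Φ X = ∑ j, (V j)ᴴ * X * V j)
    (hsum : ∑ j, (V j)ᴴ * V j = 1) (X : Md d) :
    Φ (Xᴴ * X) - (Φ X)ᴴ * Φ X = ∑ j, (X * V j - V j * Φ X)ᴴ * (X * V j - V j * Φ X) := by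
  have hterm : ∀ j, (X * V j - V j * Φ X)ᴴ * (X * V j - V j * Φ X) =
      (V j)ᴴ * (Xᴴ * X) * V j - ((V j)ᴴ * Xᴴ * V j) * Φ X - (Φ X)ᴴ * ((V j)ᴴ * X * V j)
        + (Φ X)ᴴ * ((V j)ᴴ * V j) * Φ X := by
    intro j
    simp only [Matrix.conjTranspose_sub, Matrix.conjTranspose_mul]
    noncomm_ring
  simp only [hterm, Finset.sum_add_distrib, Finset.sum_sub_distrib, ← Finset.sum_mul,
    ← Finset.mul_sum, hsum, ← hV, map_conjTranspose_of_kraus hV]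
  noncomm_ring

theorem mul_kraus_eq_of_map_eq_smul (hV : ∀ X, Φ X = ∑ j, (V j)ᴴ * X * V j)
    (hsum : ∑ j, (V j)ᴴ * V j = 1) (hΦ : IsTracePreserving Φ) {μ : ℂ} (hμ : ‖μ‖ = 1)
    {X : Md d} (hX : Φ X = μ • X) (j : Fin n) : X * V j = V j * Φ X := by
  have hμ' : star μ * μ = 1 := by
    rw [Complex.star_def, Complex.conj_mul', hμ]
    norm_num
  have htr : (∑ j, (X * V j - V j * Φ X)ᴴ * (X * V j - V j * Φ X)).trace = 0 := by
    rw [← map_conjTranspose_mul_self_sub_eq_sum_kraus hV hsum, Matrix.trace_sub, hΦ, hX,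
      Matrix.conjTranspose_smul, Matrix.smul_mul, Matrix.mul_smul, smul_smul, hμ', one_smul,
      sub_self]
  exact sub_eq_zero.mp
    (Matrix.eq_zero_of_trace_sum_conjTranspose_mul_self_eq_zero htr j (Finset.mem_univ j))

theorem mul_kraus_eq_of_mem_span {S : Set (Md d)} (hS : ∀ X ∈ S, ∀ j, X * V j = V j * Φ X)
    {Y : Md d} (hY : Y ∈ Submodule.span ℂ S) (j : Fin n) : Y * V j = V j * Φ Y := by
  induction hY using Submodule.span_induction with
  | mem X hX => exact hS X hX j
  | zero => simp
  | add X Y _ _ hX hY => simp [Matrix.add_mul, Matrix.mul_add, hX, hY]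
  | smul c X _ hX => simp [hX]

theorem map_mul_of_mul_kraus_eq (hV : ∀ X, Φ X = ∑ j, (V j)ᴴ * X * V j) (X : Md d) {Y : Md d}
    (hY : ∀ j, Y * V j = V j * Φ Y) : Φ (X * Y) = Φ X * Φ Y := by
  rw [hV, hV X, Finset.sum_mul]
  simp only [Matrix.mul_assoc, ← hY]

end Kraus

theorem expL_apply_of_apply_eq_smul {d : ℕ} (L : Md d →ₗ[ℂ] Md d) (t : ℝ) {c : ℂ} {X : Md d}
    (hX : L X = c • X) : expL L t X = Complex.exp (t * c) • X :=
  NormedSpace.exp_apply_of_apply_eq_smul _ ((congrArg ((t : ℂ) • ·) hX).trans (smul_smul _ _ _))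

theorem expL_injective {d : ℕ} (L : Md d →ₗ[ℂ] Md d) (t : ℝ) : Function.Injective (expL L t) :=
  NormedSpace.exp_continuousLinearMap_injective (E := Md d) _

theorem exists_norm_eq_one_expL_apply_eq_smul {d : ℕ} {L : Md d →ₗ[ℂ] Md d} (t : ℝ) {X : Md d}
    (hX : ∃ a : ℝ, L X = ((a : ℂ) * Complex.I) • X) :
    ∃ μ : ℂ, ‖μ‖ = 1 ∧ expL L t X = μ • X := by
  obtain ⟨a, ha⟩ := hX
  refine ⟨_, ?_, expL_apply_of_apply_eq_smul L t ha⟩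
  simpa [← mul_assoc] using Complex.norm_exp_ofReal_mul_I (t * a)

/-- each `e^{tL}` maps `P` bijectively onto `P`, and restricted to `P` it
is a trace-preserving *-automorphism. -/
theorem stmt_9 (d : ℕ) (L : Md d →ₗ[ℂ] Md d)
    (h : ∀ t : ℝ, 0 ≤ t → IsUnitalChannel (expL L t)) :
    ∀ t : ℝ, 0 ≤ t →
      Set.BijOn (expL L t) (periphGen L : Set (Md d)) (periphGen L : Set (Md d)) ∧
      (∀ X ∈ periphGen L, ∀ Y ∈ periphGen L,
        expL L t (X * Y) = expL L t X * expL L t Y) ∧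
      (∀ X ∈ periphGen L, expL L t Xᴴ = (expL L t X)ᴴ) ∧
      (∀ X ∈ periphGen L, (expL L t X).trace = X.trace) := by
  intro t ht
  obtain ⟨⟨n, V, hV⟩, hunital, htp⟩ := h t ht
  have hsum := sum_kraus_eq_one hV hunital
  have hmap : (periphGen L).map (expL L t) = periphGen L :=
    Submodule.map_span_eq_self_of_forall_eq_smul _ fun X hX => by
      obtain ⟨μ, hμ, hμX⟩ := exists_norm_eq_one_expL_apply_eq_smul t hX
      exact ⟨μ, norm_ne_zero_iff.mp (hμ ▸ one_ne_zero), hμX⟩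
  have hinter : ∀ Y ∈ periphGen L, ∀ j, Y * V j = V j * expL L t Y :=
    fun Y hY => mul_kraus_eq_of_mem_span (fun X hX => by
      obtain ⟨μ, hμ, hμX⟩ := exists_norm_eq_one_expL_apply_eq_smul t hX
      exact mul_kraus_eq_of_map_eq_smul hV hsum htp hμ hμX) hY
  refine ⟨?_, fun X _ Y hY => map_mul_of_mul_kraus_eq hV X (hinter Y hY),
    fun X _ => map_conjTranspose_of_kraus hV X, fun X _ => htp X⟩
  simpa only [← Submodule.map_coe, hmap] using
    (expL_injective L t).injOn.bijOn_image (s := (periphGen L : Set (Md d)))
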